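/- arXiv:2501.08779 — 3 statements merged into one kernel-verified Lean document; each statement's English description precedes it below -/
import Mathlib

section
/- The EKI update preserves the subspace property: if all ensemble members u_j⁽ⁿ⁾ lie in the affine span S of the initial ensemble (equivalently, the linear span if S is a linear subspace containing the ensemble), then each updated member u_{j+1}⁽ⁿ⁾ = u_j⁽ⁿ⁾ + Δt C_j^{uG}(Γ + Δt C_j^{GG})⁻¹(y - G(u_j⁽ⁿ⁾)) also lies in S. -/
open Matrix Finset

/-- The EKI update preserves the subspace spanned by the ensemble: if all ensemble members
lie in a linear subspace `S`, so do the updated members. -/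
theorem eki_subspace_property {d k N : ℕ} [NeZero N]
    (S : Submodule ℝ (Fin d → ℝ))
    (u : Fin N → (Fin d → ℝ)) (hu : ∀ n, u n ∈ S)
    (G : (Fin d → ℝ) → (Fin k → ℝ)) (y : Fin k → ℝ)
    (Γ : Matrix (Fin k) (Fin k) ℝ) (hΓ : Γ.PosDef)
    (Δt : ℝ) (hΔt : 0 < Δt)
    (ubar : Fin d → ℝ) (hubar : ubar = (N : ℝ)⁻¹ • ∑ n, u n)
    (Gbar : Fin k → ℝ) (hGbar : Gbar = (N : ℝ)⁻¹ • ∑ n, G (u n))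
    (CuG : Matrix (Fin d) (Fin k) ℝ)
    (hCuG : ∀ i j, CuG i j = (N : ℝ)⁻¹ * ∑ n, (u n i - ubar i) * (G (u n) j - Gbar j))
    (CGG : Matrix (Fin k) (Fin k) ℝ)
    (hCGG : ∀ i j, CGG i j = (N : ℝ)⁻¹ * ∑ n, (G (u n) i - Gbar i) * (G (u n) j - Gbar j)) :
    ∀ n, u n + Δt • CuG.mulVec ((Γ + Δt • CGG)⁻¹.mulVec (y - G (u n))) ∈ S := by
  have hubarS : ubar ∈ S := by
    rw [hubar]
    exact S.smul_mem _ (Submodule.sum_mem S fun n _ => hu n)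
  have key : ∀ w : Fin k → ℝ, CuG.mulVec w ∈ S := by
    intro w
    have h : CuG.mulVec w
        = ∑ n, ((N : ℝ)⁻¹ * ∑ j, (G (u n) j - Gbar j) * w j) • (u n - ubar) := by
      funext i
      simp only [mulVec, dotProduct, hCuG, Finset.sum_apply, Pi.smul_apply, Pi.sub_apply,
        smul_eq_mul, Finset.sum_mul, Finset.mul_sum]
      rw [Finset.sum_comm]
      apply Finset.sum_congr rfl
      intro n _
      apply Finset.sum_congr rfl
      intro j _
      ring
    rw [h]
    exact Submodule.sum_mem S fun n _ =>
      S.smul_mem _ (S.sub_mem (hu n) hubarS)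
  intro n
  exact S.add_mem (hu n) (S.smul_mem _ (key _))
end

section
/- The Nesterov-accelerated EKI update preserves the subspace property: if S is a linear subspace containing u_{j-1}⁽ⁿ⁾ and u_j⁽ⁿ⁾ for all n, then the nudged ensemble v_j⁽ⁿ⁾ = u_j⁽ⁿ⁾ + λ_j(u_j⁽ⁿ⁾ - u_{j-1}⁽ⁿ⁾) lies in S, and hence the update u_{j+1}⁽ⁿ⁾ = v_j⁽ⁿ⁾ + Δt C_j^{vG}(Γ + Δt C_j^{GG})⁻¹(y - G(v_j⁽ⁿ⁾)) also lies in S. -/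
open Matrix Finset

/-- The Nesterov-accelerated EKI update preserves the subspace property: the nudged ensemble
`v⁽ⁿ⁾ = u_j⁽ⁿ⁾ + λ(u_j⁽ⁿ⁾ - u_{j-1}⁽ⁿ⁾)` stays in `S`, and so does the subsequent EKI update. -/
theorem nesterov_eki_subspace_property {d k N : ℕ} [NeZero N]
    (S : Submodule ℝ (Fin d → ℝ))
    (uprev ucur : Fin N → (Fin d → ℝ))
    (huprev : ∀ n, uprev n ∈ S) (hucur : ∀ n, ucur n ∈ S)
    (lam : ℝ)
    (v : Fin N → (Fin d → ℝ)) (hv : ∀ n, v n = ucur n + lam • (ucur n - uprev n))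
    (G : (Fin d → ℝ) → (Fin k → ℝ)) (y : Fin k → ℝ)
    (Γ : Matrix (Fin k) (Fin k) ℝ) (hΓ : Γ.PosDef)
    (Δt : ℝ) (hΔt : 0 < Δt)
    (vbar : Fin d → ℝ) (hvbar : vbar = (N : ℝ)⁻¹ • ∑ n, v n)
    (Gbar : Fin k → ℝ) (hGbar : Gbar = (N : ℝ)⁻¹ • ∑ n, G (v n))
    (CvG : Matrix (Fin d) (Fin k) ℝ)
    (hCvG : ∀ i j, CvG i j = (N : ℝ)⁻¹ * ∑ n, (v n i - vbar i) * (G (v n) j - Gbar j))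
    (CGG : Matrix (Fin k) (Fin k) ℝ)
    (hCGG : ∀ i j, CGG i j = (N : ℝ)⁻¹ * ∑ n, (G (v n) i - Gbar i) * (G (v n) j - Gbar j)) :
    (∀ n, v n ∈ S) ∧
    (∀ n, v n + Δt • CvG.mulVec ((Γ + Δt • CGG)⁻¹.mulVec (y - G (v n))) ∈ S) := by
  have hvS : ∀ n, v n ∈ S := by
    intro n
    rw [hv n]
    exact S.add_mem (hucur n) (S.smul_mem _ (S.sub_mem (hucur n) (huprev n)))
  refine ⟨hvS, fun n => ?_⟩
  have hvbarS : vbar ∈ S := by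
    rw [hvbar]; exact S.smul_mem _ (Submodule.sum_mem S fun m _ => hvS m)
  -- CvG.mulVec z is a linear combination of (v m - vbar)
  have key : ∀ z : Fin k → ℝ, CvG.mulVec z ∈ S := by
    intro z
    have heq : CvG.mulVec z =
        ∑ m, ((N : ℝ)⁻¹ * ∑ j, (G (v m) j - Gbar j) * z j) • (v m - vbar) := by
      funext i
      rw [Finset.sum_apply]
      simp only [Matrix.mulVec, dotProduct, hCvG, Pi.smul_apply, Pi.sub_apply,
        smul_eq_mul, Finset.sum_mul, Finset.mul_sum]
      rw [Finset.sum_comm]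
      exact Finset.sum_congr rfl fun m _ => Finset.sum_congr rfl fun j _ => by ring
    rw [heq]
    exact Submodule.sum_mem S fun m _ => S.smul_mem _ (S.sub_mem (hvS m) hvbarS)
  exact S.add_mem (hvS n) (S.smul_mem _ (key _))
end

section
/- For convex J with minimizer u*, solutions of the Nesterov ODE ü + (3/t)u̇ + ∇J(u) = 0 satisfy J(u(t)) - J(u*) ≤ 2‖u(0⁺) - u*‖²/t², where the Lyapunov function E(t) = t²(J(u(t)) - J(u*)) + 2‖u(t) + (t/2)u̇(t) - u*‖² is non-increasing in t. -/
/-!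
Along a trajectory of `ü + (3/t) u̇ + ∇J(u) = 0` the "momentum" `u + (t/2) u̇ - u*` has
derivative `-(t/2) ∇J(u)`. Hence the Lyapunov energy
`E(t) = t² (J(u) - J(u*)) + 2 ‖u + (t/2) u̇ - u*‖²` has derivative
`2t (J(u) - J(u*) - ⟪∇J(u), u - u*⟫)`, which is `≤ 0` by the first-order characterisation of
convexity, and `t² (J(u(t)) - J(u*)) ≤ E(t) ≤ E(0⁺) = 2 ‖u₀ - u*‖²`.
-/

open Set Filter
open scoped Topology RealInnerProductSpace

theorem AntitoneOn.le_of_tendsto_nhdsGT {β : Type*} [TopologicalSpace β] [Preorder β]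
    [OrderClosedTopology β] {f : ℝ → β} {a : ℝ} {L : β} (hf : AntitoneOn f (Ioi a))
    (hlim : Tendsto f (𝓝[>] a) (𝓝 L)) {t : ℝ} (ht : a < t) : f t ≤ L := by
  refine ge_of_tendsto hlim ?_
  filter_upwards [Ioo_mem_nhdsGT ht] with s hs using hf hs.1 ht hs.2.le

section InnerProductSpace

variable {E : Type*} [NormedAddCommGroup E] [InnerProductSpace ℝ E]

noncomputable def nesterovEnergy (J : E → ℝ) (x₀ : E) (u u' : ℝ → E) (t : ℝ) : ℝ :=
  t ^ 2 * (J (u t) - J x₀) + 2 * ‖u t + (t / 2) • u' t - x₀‖ ^ 2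

theorem tendsto_nesterovEnergy_nhdsGT_zero {J : E → ℝ} {x₀ u₀ : E} {u u' : ℝ → E}
    (hJ : ContinuousAt J u₀) (hlim : Tendsto u (𝓝[>] 0) (𝓝 u₀))
    (hlim' : Tendsto (fun t => t • u' t) (𝓝[>] 0) (𝓝 0)) :
    Tendsto (nesterovEnergy J x₀ u u') (𝓝[>] 0) (𝓝 (2 * ‖u₀ - x₀‖ ^ 2)) := by
  have hsq : Tendsto (fun t : ℝ => t ^ 2) (𝓝[>] 0) (𝓝 0) := by
    simpa using ((continuous_pow 2).tendsto (0 : ℝ)).mono_left nhdsWithin_le_nhds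
  have hmomentum : Tendsto (fun t => u t + (t / 2) • u' t - x₀) (𝓝[>] 0) (𝓝 (u₀ - x₀)) := by
    have h := (hlim.add (hlim'.const_smul (2⁻¹ : ℝ))).sub_const x₀
    rw [smul_zero, add_zero] at h
    refine h.congr fun t => ?_
    rw [smul_smul, inv_mul_eq_div]
  have h := (hsq.mul ((hJ.tendsto.comp hlim).sub_const (J x₀))).add
    ((hmomentum.norm.pow 2).const_mul 2)
  rwa [zero_mul, zero_add] at h

variable [CompleteSpace E]

theorem HasGradientAt.comp_hasDerivAt {f : E → ℝ} {g : E} {u : ℝ → E} {v : E} {t : ℝ}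
    (hf : HasGradientAt f g (u t)) (hu : HasDerivAt u v t) :
    HasDerivAt (fun s => f (u s)) ⟪g, v⟫ t := by
  have h := hf.hasFDerivAt.comp_hasDerivAt t hu
  rwa [InnerProductSpace.toDual_apply_apply] at h

theorem ConvexOn.inner_gradient_le_sub {f : E → ℝ} (hf : ConvexOn ℝ univ f) {x y g : E}
    (hg : HasGradientAt f g x) : ⟪g, y - x⟫ ≤ f y - f x := by
  have hφ : ConvexOn ℝ univ (f ∘ AffineMap.lineMap (k := ℝ) x y) := by
    simpa using hf.comp_affineMap (AffineMap.lineMap x y)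
  have hφ' : HasDerivAt (f ∘ AffineMap.lineMap (k := ℝ) x y) ⟪g, y - x⟫ 0 :=
    (AffineMap.lineMap_apply_zero (k := ℝ) x y ▸ hg).comp_hasDerivAt
      (AffineMap.hasDerivAt_lineMap (x := 0))
  simpa [slope_def_field] using hφ.le_slope_of_hasDerivAt trivial trivial zero_lt_one hφ'

theorem hasDerivAt_nesterovEnergy {J : E → ℝ} {x₀ g : E} {u u' u'' : ℝ → E} {t : ℝ}
    (ht : t ≠ 0) (hJ : HasGradientAt J g (u t)) (hu : HasDerivAt u (u' t) t)
    (hu' : HasDerivAt u' (u'' t) t) (hode : u'' t + (3 / t) • u' t + g = 0) :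
    HasDerivAt (nesterovEnergy J x₀ u u') (2 * t * (J (u t) - J x₀ - ⟪g, u t - x₀⟫)) t := by
  have hmomentum : HasDerivAt (fun s => u s + (s / 2) • u' s - x₀) (-(t / 2) • g) t := by
    refine ((hu.add (((hasDerivAt_id' t).div_const 2).smul hu')).sub_const x₀).congr_deriv ?_
    have hacc : u'' t = -((3 / t) • u' t + g) :=
      eq_neg_of_add_eq_zero_left (by rwa [← add_assoc])
    rw [hacc, smul_neg, smul_add, smul_smul, show t / 2 * (3 / t) = 3 / 2 by field_simp]
    module
  refine (((hasDerivAt_pow 2 t).mul ((hJ.comp_hasDerivAt hu).sub_const (J x₀))).add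
    (hmomentum.norm_sq.const_mul 2)).congr_deriv ?_
  rw [show u t + (t / 2) • u' t - x₀ = (u t - x₀) + (t / 2) • u' t by abel, inner_smul_right,
    inner_add_left, inner_smul_left, real_inner_comm g, real_inner_comm g]
  simp only [RCLike.conj_to_real]
  ring

theorem antitoneOn_nesterovEnergy {J : E → ℝ} (hJ : Differentiable ℝ J)
    (hconv : ConvexOn ℝ univ J) (x₀ : E) {u u' u'' : ℝ → E}
    (hu : ∀ t ∈ Ioi (0 : ℝ), HasDerivAt u (u' t) t)
    (hu' : ∀ t ∈ Ioi (0 : ℝ), HasDerivAt u' (u'' t) t)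
    (hode : ∀ t ∈ Ioi (0 : ℝ), u'' t + (3 / t) • u' t + gradient J (u t) = 0) :
    AntitoneOn (nesterovEnergy J x₀ u u') (Ioi 0) := by
  have hE (t : ℝ) (ht : t ∈ Ioi 0) := hasDerivAt_nesterovEnergy (x₀ := x₀) (ne_of_gt ht)
    (hJ (u t)).hasGradientAt (hu t ht) (hu' t ht) (hode t ht)
  refine antitoneOn_of_hasDerivWithinAt_nonpos (convex_Ioi 0)
    (fun t ht => (hE t ht).continuousAt.continuousWithinAt)
    (fun t ht => (hE t (interior_subset ht)).hasDerivWithinAt) fun t ht => ?_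
  rw [interior_Ioi] at ht
  have hfirst_order := hconv.inner_gradient_le_sub (y := x₀) (hJ (u t)).hasGradientAt
  rw [← neg_sub (u t), inner_neg_right] at hfirst_order
  exact mul_nonpos_of_nonneg_of_nonpos
    (mul_nonneg zero_le_two (le_of_lt ht)) (by linarith)

end InnerProductSpace

theorem nesterov_ode_convergence_rate_general {d : ℕ}
    (J : EuclideanSpace ℝ (Fin d) → ℝ) (hJ : ContDiff ℝ 1 J)
    (hconv : ConvexOn ℝ Set.univ J)
    (ustar : EuclideanSpace ℝ (Fin d))
    (u u' u'' : ℝ → EuclideanSpace ℝ (Fin d))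
    (hu : ∀ t ∈ Ioi (0 : ℝ), HasDerivAt u (u' t) t)
    (hu' : ∀ t ∈ Ioi (0 : ℝ), HasDerivAt u' (u'' t) t)
    (hode : ∀ t ∈ Ioi (0 : ℝ), u'' t + (3 / t) • u' t + gradient J (u t) = 0)
    (u₀ : EuclideanSpace ℝ (Fin d))
    (hlim : Tendsto u (𝓝[>] 0) (𝓝 u₀))
    (hlim' : Tendsto (fun t => t • u' t) (𝓝[>] 0) (𝓝 0)) :
    AntitoneOn (fun t => t ^ 2 * (J (u t) - J ustar) +
      2 * ‖u t + (t / 2) • u' t - ustar‖ ^ 2) (Ioi (0 : ℝ)) ∧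
    ∀ t ∈ Ioi (0 : ℝ), J (u t) - J ustar ≤ 2 * ‖u₀ - ustar‖ ^ 2 / t ^ 2 := by
  have hanti := antitoneOn_nesterovEnergy (hJ.differentiable one_ne_zero) hconv ustar hu hu' hode
  refine ⟨hanti, fun t ht => ?_⟩
  have hbound : nesterovEnergy J ustar u u' t ≤ 2 * ‖u₀ - ustar‖ ^ 2 :=
    hanti.le_of_tendsto_nhdsGT
      (tendsto_nesterovEnergy_nhdsGT_zero hJ.continuous.continuousAt hlim hlim') ht
  rw [le_div_iff₀ (pow_pos ht 2)]
  unfold nesterovEnergy at hbound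
  linarith [sq_nonneg ‖u t + (t / 2) • u' t - ustar‖]

/-- Su–Boyd–Candès convergence rate for the Nesterov ODE: for convex `J` with minimizer `u*`,
the Lyapunov function `E(t) = t²(J(u(t)) - J(u*)) + 2‖u(t) + (t/2)u̇(t) - u*‖²` is
non-increasing, and `J(u(t)) - J(u*) ≤ 2‖u(0⁺) - u*‖²/t²`. -/
theorem nesterov_ode_convergence_rate {d : ℕ}
    (J : EuclideanSpace ℝ (Fin d) → ℝ) (hJ : ContDiff ℝ 1 J)
    (hconv : ConvexOn ℝ Set.univ J)
    (ustar : EuclideanSpace ℝ (Fin d)) (hmin : ∀ x, J ustar ≤ J x)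
    (u u' u'' : ℝ → EuclideanSpace ℝ (Fin d))
    (hu : ∀ t ∈ Ioi (0 : ℝ), HasDerivAt u (u' t) t)
    (hu' : ∀ t ∈ Ioi (0 : ℝ), HasDerivAt u' (u'' t) t)
    (hode : ∀ t ∈ Ioi (0 : ℝ), u'' t + (3 / t) • u' t + gradient J (u t) = 0)
    (u₀ : EuclideanSpace ℝ (Fin d))
    (hlim : Tendsto u (𝓝[>] 0) (𝓝 u₀))
    (hlim' : Tendsto (fun t => t • u' t) (𝓝[>] 0) (𝓝 0)) :
    AntitoneOn (fun t => t ^ 2 * (J (u t) - J ustar) +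
      2 * ‖u t + (t / 2) • u' t - ustar‖ ^ 2) (Ioi (0 : ℝ)) ∧
    ∀ t ∈ Ioi (0 : ℝ), J (u t) - J ustar ≤ 2 * ‖u₀ - ustar‖ ^ 2 / t ^ 2 :=
  nesterov_ode_convergence_rate_general J hJ hconv ustar u u' u'' hu hu' hode u₀ hlim hlim'
end
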